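/- For any map f : X → Y, 𝒮(f) preserves strong determinism and partition of SDDs: if α ∈ 𝒮(X) is strongly deterministic (every decomposition {(p_i,s_i)} in α has σ(p_i) ∩ σ(p_j) = ∅ for i ≠ j), then so is 𝒮(f)(α); and if in addition every decomposition satisfies ⋃_i σ(p_i) = 𝒫(X), then every decomposition of 𝒮(f)(α) satisfies ⋃_i σ(p_i') = 𝒫(Y). -/
import Mathlib


/-- SDDs over X: terminals ⊤, ⊥, literals x, ¬x, and decompositions. -/
inductive SDD (X : Type) where
  | top : SDD X
  | bot : SDD X
  | lit (x : X) : SDD X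
  | nlit (x : X) : SDD X
  | decomp (l : List (SDD X × SDD X)) : SDD X

mutual
/-- Relabeling of SDDs (action of the functor 𝒮 on maps). -/
def Smap {X Y : Type} (f : X → Y) : SDD X → SDD Y
  | .top => .top
  | .bot => .bot
  | .lit x => .lit (f x)
  | .nlit x => .nlit (f x)
  | .decomp l => .decomp (SmapList f l)

def SmapList {X Y : Type} (f : X → Y) :
    List (SDD X × SDD X) → List (SDD Y × SDD Y)
  | [] => []
  | (p, s) :: rest => (Smap f p, Smap f s) :: SmapList f rest
end

mutual
/-- SDD semantics σ_X : 𝒮(X) → 𝒫²(X). -/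
def sddSem {X : Type} : SDD X → Set (Set X)
  | .top => Set.univ
  | .bot => ∅
  | .lit x => {C | x ∈ C}
  | .nlit x => {C | x ∉ C}
  | .decomp l => sddSemList l

/-- Semantics of a decomposition: ⋃ᵢ σ(pᵢ) ∩ σ(sᵢ). -/
def sddSemList {X : Type} : List (SDD X × SDD X) → Set (Set X)
  | [] => ∅
  | (p, s) :: rest => (sddSem p ∩ sddSem s) ∪ sddSemList rest
end

mutual
/-- An SDD is strongly deterministic: every decomposition occurring in it
has pairwise disjoint primes. -/
def StronglyDet {X : Type} : SDD X → Prop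
  | .top => True
  | .bot => True
  | .lit _ => True
  | .nlit _ => True
  | .decomp l =>
      StronglyDetList l ∧
        l.Pairwise (fun a b => sddSem a.1 ∩ sddSem b.1 = ∅)

def StronglyDetList {X : Type} : List (SDD X × SDD X) → Prop
  | [] => True
  | (p, s) :: rest => StronglyDet p ∧ StronglyDet s ∧ StronglyDetList rest
end

/-- The union of the interpretations of the primes of a decomposition. -/
def primesUnion {X : Type} : List (SDD X × SDD X) → Set (Set X)
  | [] => ∅
  | (p, _) :: rest => sddSem p ∪ primesUnion rest

mutual
/-- Every decomposition occurring in the SDD has primes covering 𝒫(X). -/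
def Covering {X : Type} : SDD X → Prop
  | .top => True
  | .bot => True
  | .lit _ => True
  | .nlit _ => True
  | .decomp l => CoveringList l ∧ primesUnion l = Set.univ

def CoveringList {X : Type} : List (SDD X × SDD X) → Prop
  | [] => True
  | (p, s) :: rest => Covering p ∧ Covering s ∧ CoveringList rest
end


mutual
theorem sem_Smap {X Y : Type} (f : X → Y) :
    ∀ a : SDD X, sddSem (Smap f a) = (fun C => f ⁻¹' C) ⁻¹' sddSem a
  | .top => by
      simp [Smap, sddSem]
  | .bot => by
      simp [Smap, sddSem]
  | .lit x => by
      ext C; simp [Smap, sddSem, Set.preimage]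
  | .nlit x => by
      ext C; simp [Smap, sddSem, Set.preimage]
  | .decomp l => by
      simp [Smap, sddSem, semList_SmapList f l]

theorem semList_SmapList {X Y : Type} (f : X → Y) :
    ∀ l : List (SDD X × SDD X),
      sddSemList (SmapList f l) = (fun C => f ⁻¹' C) ⁻¹' sddSemList l
  | [] => by simp [SmapList, sddSemList]
  | (p, s) :: rest => by
      simp only [SmapList, sddSemList, sem_Smap f p, sem_Smap f s,
        semList_SmapList f rest, Set.preimage_union, Set.preimage_inter]
end

theorem primesUnion_SmapList {X Y : Type} (f : X → Y) :
    ∀ l : List (SDD X × SDD X),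
      primesUnion (SmapList f l) = (fun C => f ⁻¹' C) ⁻¹' primesUnion l
  | [] => by simp [SmapList, primesUnion]
  | (p, s) :: rest => by
      simp only [SmapList, primesUnion, sem_Smap f p,
        primesUnion_SmapList f rest, Set.preimage_union]

theorem SmapList_eq_map {X Y : Type} (f : X → Y) :
    ∀ l : List (SDD X × SDD X),
      SmapList f l = l.map (fun a => (Smap f a.1, Smap f a.2))
  | [] => rfl
  | (p, s) :: rest => by
      simp [SmapList, SmapList_eq_map f rest]

mutual
theorem SD_Smap {X Y : Type} (f : X → Y) :
    ∀ a : SDD X, StronglyDet a → StronglyDet (Smap f a)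
  | .top, _ => trivial
  | .bot, _ => trivial
  | .lit _, _ => trivial
  | .nlit _, _ => trivial
  | .decomp l, h => by
      obtain ⟨h1, h2⟩ := h
      refine ⟨SDList_Smap f l h1, ?_⟩
      rw [SmapList_eq_map]
      refine List.Pairwise.map _ ?_ h2
      intro a b hab
      simp only [sem_Smap]
      rw [← Set.preimage_inter, hab]
      rfl

theorem SDList_Smap {X Y : Type} (f : X → Y) :
    ∀ l : List (SDD X × SDD X), StronglyDetList l → StronglyDetList (SmapList f l)
  | [], _ => trivial
  | (p, s) :: rest, h =>
      ⟨SD_Smap f p h.1, SD_Smap f s h.2.1, SDList_Smap f rest h.2.2⟩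
end

mutual
theorem Cov_Smap {X Y : Type} (f : X → Y) :
    ∀ a : SDD X, Covering a → Covering (Smap f a)
  | .top, _ => trivial
  | .bot, _ => trivial
  | .lit _, _ => trivial
  | .nlit _, _ => trivial
  | .decomp l, h => by
      obtain ⟨h1, h2⟩ := h
      refine ⟨CovList_Smap f l h1, ?_⟩
      rw [primesUnion_SmapList, h2]
      rfl

theorem CovList_Smap {X Y : Type} (f : X → Y) :
    ∀ l : List (SDD X × SDD X), CoveringList l → CoveringList (SmapList f l)
  | [], _ => trivial
  | (p, s) :: rest, h =>
      ⟨Cov_Smap f p h.1, Cov_Smap f s h.2.1, CovList_Smap f rest h.2.2⟩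
end

theorem Smap_preserves_strongDet_and_partition {X Y : Type} (f : X → Y) (α : SDD X) :
    (StronglyDet α → StronglyDet (Smap f α)) ∧
    (StronglyDet α → Covering α → StronglyDet (Smap f α) ∧ Covering (Smap f α)) := by
  exact ⟨SD_Smap f α, fun h1 h2 => ⟨SD_Smap f α h1, Cov_Smap f α h2⟩⟩
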